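/- Define, for f ∈ L¹([0,θ], λ_θ) with λ_θ Lebesgue measure on [0,θ], Vf(x) = Σ_{i≥m} f(u_i(x))/(iθ+x)². Then V is the Perron-Frobenius operator of T_θ under λ_θ, i.e. ∫_A Vf dλ_θ = ∫_{T_θ⁻¹(A)} f dλ_θ for every Borel A ⊆ [0,θ], and for every n ≥ 1, Vⁿf(x) = Uⁿg(x)/(1+θx) a.e. in [0,θ], where g(x) = (1+θx)f(x). -/

import Mathlib

open MeasureTheory Real Set

/-- θ = 1/√m. -/
noncomputable def theta (m : ℕ) : ℝ := 1 / Real.sqrt m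

/-- The θ-expansion transformation T_θ(x) = 1/x − θ·⌊1/(xθ)⌋ for x ≠ 0, T_θ(0) = 0. -/
noncomputable def Tmap (m : ℕ) (x : ℝ) : ℝ :=
  if x = 0 then 0 else 1 / x - theta m * (⌊1 / (x * theta m)⌋ : ℝ)

/-- The invariant measure γ_θ(A) = (1/log(1+θ²)) ∫_A θ/(1+θx) dx on [0,θ]. -/
noncomputable def gammaMeasure (m : ℕ) : Measure ℝ :=
  (ENNReal.ofReal (1 / Real.log (1 + theta m ^ 2))) •
    ((volume.restrict (Icc 0 (theta m))).withDensity
      fun x => ENNReal.ofReal (theta m / (1 + theta m * x)))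

/-- u_i(x) = 1/(iθ + x). -/
noncomputable def uMap (m i : ℕ) (x : ℝ) : ℝ := 1 / (i * theta m + x)

/-- P_i(x) = (1+θx)/((x+iθ)(x+(i+1)θ)). -/
noncomputable def Pfun (m i : ℕ) (x : ℝ) : ℝ :=
  (1 + theta m * x) / ((x + i * theta m) * (x + (i + 1) * theta m))

/-- The Perron-Frobenius operator Uf(x) = Σ_{i≥m} P_i(x)·f(u_i(x)). -/
noncomputable def Uop (m : ℕ) (f : ℝ → ℝ) (x : ℝ) : ℝ :=
  ∑' i : ℕ, Pfun m (i + m) x * f (uMap m (i + m) x)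


/-- Vf(x) = Σ_{i≥m} f(u_i(x))/(iθ+x)². -/
noncomputable def Vop (m : ℕ) (f : ℝ → ℝ) (x : ℝ) : ℝ :=
  ∑' i : ℕ, f (uMap m (i + m) x) / (((i + m : ℕ) : ℝ) * theta m + x) ^ 2

/-!
On `(0, θ]` the map `T_θ` has the full inverse branches `u_i`, `i ≥ m`: each `u_i` maps `(0, θ)`
into `(0, θ]`, `T_θ ∘ u_i = id` there, and every `x ∈ (0, θ]` is `u_i (T_θ x)` with
`i = ⌊1/(xθ)⌋ ≥ m` because `θ² = 1/m`. Hence, up to the countable set `T_θ⁻¹{0, θ}`, `T_θ⁻¹(A)` is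
the disjoint union of the images `u_i(A)`, and the change of variables `y = u_i(x)`,
`|u_i'(x)| = (iθ + x)⁻²`, on each branch gives `∫_A Vf = ∫_{T_θ⁻¹(A)} f`.
The formula for `Vⁿ` follows by induction from the pointwise identity
`P_i(x) (1 + θ u_i(x)) = (1 + θx)/(iθ + x)²`, i.e. `U((1 + θ·) h) = (1 + θ·) V h` on `[0, ∞)`.
-/

theorem integral_tsum_abs_deriv_smul_eq_integral_iUnion_image {E : Type*} [NormedAddCommGroup E]
    [NormedSpace ℝ E] [CompleteSpace E] {ι : Type*} [Countable ι] {s : Set ℝ}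
    (hs : MeasurableSet s) {u u' : ι → ℝ → ℝ}
    (hu : ∀ i, ∀ x ∈ s, HasDerivWithinAt (u i) (u' i x) s x) (hinj : ∀ i, InjOn (u i) s)
    (hdisj : Pairwise (Function.onFun Disjoint fun i => u i '' s)) {f : ℝ → E}
    (hf : IntegrableOn f (⋃ i, u i '' s)) :
    ∫ x in s, ∑' i, |u' i x| • f (u i x) = ∫ y in ⋃ i, u i '' s, f y := by
  have hmeas i : MeasurableSet (u i '' s) :=
    measurable_image_of_fderivWithin hs (fun x hx => (hu i x hx).hasFDerivWithinAt) (hinj i)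
  have hint i : IntegrableOn (fun x => |u' i x| • f (u i x)) s :=
    (integrableOn_image_iff_integrableOn_abs_deriv_smul hs (hu i) (hinj i) f).1
      (hf.mono_set (subset_iUnion (fun j => u j '' s) i))
  have hnorm i : ∫ x in s, ‖|u' i x| • f (u i x)‖ = ∫ y in u i '' s, ‖f y‖ := by
    rw [integral_image_eq_integral_abs_deriv_smul hs (hu i) (hinj i)]
    simp only [norm_smul, Real.norm_eq_abs, abs_abs, smul_eq_mul]
  have hsum : Summable fun i => ∫ x in s, ‖|u' i x| • f (u i x)‖ := by
    simpa only [hnorm] using (hasSum_integral_iUnion hmeas hdisj hf.norm).summable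
  rw [← integral_tsum_of_summable_integral_norm hint hsum, integral_iUnion hmeas hdisj hf]
  exact tsum_congr fun i => (integral_image_eq_integral_abs_deriv_smul hs (hu i) (hinj i) f).symm

theorem inter_Ioo_ae_eq {α : Type*} [PartialOrder α] [MeasurableSpace α] {μ : Measure α}
    [NullSingletonClass μ] {a b : α} {A : Set α} (hA : A ⊆ Icc a b) :
    (A ∩ Ioo a b : Set α) =ᵐ[μ] A := by
  have hends : A \ (A ∩ Ioo a b) ⊆ {a, b} := fun x hx =>
    have hx' := hA hx.1
    Icc_sdiff_Ioo_same (hx'.1.trans hx'.2) ▸ ⟨hx', fun h => hx.2 ⟨hx.1, h⟩⟩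
  exact (LE.le.eventuallyLE inter_subset_left).antisymm
    (ae_le_set.2 (measure_mono_null hends ((toFinite _).measure_zero μ)))

variable {m : ℕ}

theorem theta_pos (hm : 0 < m) : 0 < theta m := by
  unfold theta; positivity

theorem natCast_mul_theta_sq (hm : 0 < m) : (m : ℝ) * theta m ^ 2 = 1 := by
  have : (0 : ℝ) < m := by exact_mod_cast hm
  rw [theta, div_pow, Real.sq_sqrt this.le]
  field_simp

theorem Tmap_uMap (hm : 0 < m) (c : ℕ) {y : ℝ} (hy : y ∈ Ioo 0 (theta m)) :
    Tmap m (uMap m c y) = y := by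
  have hθ := theta_pos hm
  have hd : 0 < (c : ℝ) * theta m + y := by have := hy.1; positivity
  have hfloor : ⌊1 / (uMap m c y * theta m)⌋ = c := by
    have hq : 1 / (uMap m c y * theta m) = c + y / theta m := by
      rw [uMap]; field_simp
    rw [hq, Int.floor_eq_iff]
    push_cast
    constructor
    · linarith [div_pos hy.1 hθ]
    · linarith [(div_lt_one hθ).2 hy.2]
  rw [Tmap, if_neg (by unfold uMap; positivity), hfloor, uMap, one_div_one_div]
  push_cast
  ring

theorem uMap_mem_Ioc (hm : 0 < m) {c : ℕ} (hc : m ≤ c) {y : ℝ} (hy : 0 < y) :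
    uMap m c y ∈ Ioc 0 (theta m) := by
  have hθ := theta_pos hm
  have hcm : (m : ℝ) ≤ c := by exact_mod_cast hc
  have hd : 0 < (c : ℝ) * theta m + y := by positivity
  refine ⟨by unfold uMap; positivity, ?_⟩
  rw [uMap, div_le_iff₀ hd]
  nlinarith [natCast_mul_theta_sq hm]

theorem exists_uMap_Tmap_eq (hm : 0 < m) {x : ℝ} (hx : x ∈ Ioc 0 (theta m)) :
    ∃ i : ℕ, uMap m (i + m) (Tmap m x) = x := by
  have hθ := theta_pos hm
  have hxθ : 0 < x * theta m := mul_pos hx.1 hθ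
  have hmk : (m : ℤ) ≤ ⌊1 / (x * theta m)⌋ := by
    rw [Int.le_floor, le_div_iff₀ hxθ]
    push_cast
    nlinarith [natCast_mul_theta_sq hm, hx.2]
  obtain ⟨i, hi⟩ := Int.eq_ofNat_of_zero_le (sub_nonneg.2 hmk)
  refine ⟨i, ?_⟩
  have hk : (⌊1 / (x * theta m)⌋ : ℝ) = ((i + m : ℕ) : ℝ) := by
    push_cast; exact_mod_cast (by omega : ⌊1 / (x * theta m)⌋ = i + m)
  rw [Tmap, if_neg hx.1.ne', hk, uMap, mul_comm (theta m), add_sub_cancel, one_div_one_div]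

theorem Tmap_preimage_inter_Ioc (hm : 0 < m) {A : Set ℝ} (hA : A ⊆ Ioo 0 (theta m)) :
    Tmap m ⁻¹' A ∩ Ioc 0 (theta m) = ⋃ i : ℕ, uMap m (i + m) '' A := by
  ext x
  simp only [mem_inter_iff, mem_preimage, mem_iUnion, mem_image]
  constructor
  · rintro ⟨hTx, hx⟩
    obtain ⟨i, hi⟩ := exists_uMap_Tmap_eq hm hx
    exact ⟨i, Tmap m x, hTx, hi⟩
  · rintro ⟨i, y, hy, rfl⟩
    rw [Tmap_uMap hm _ (hA hy)]
    exact ⟨hy, uMap_mem_Ioc hm (Nat.le_add_left m i) (hA hy).1⟩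

theorem pairwise_disjoint_image_uMap (hm : 0 < m) {A : Set ℝ} (hA : A ⊆ Ioo 0 (theta m)) :
    Pairwise (Function.onFun Disjoint fun i : ℕ => uMap m (i + m) '' A) := by
  intro i j hij
  refine disjoint_left.2 ?_
  rintro _ ⟨y, hy, rfl⟩ ⟨z, hz, hzy⟩
  have hzy' : z = y := by
    simpa only [Tmap_uMap hm _ (hA hy), Tmap_uMap hm _ (hA hz)] using congrArg (Tmap m) hzy
  subst hzy'
  rw [uMap, uMap, one_div, one_div, inv_inj, add_left_inj,
    mul_left_inj' (theta_pos hm).ne', Nat.cast_inj] at hzy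
  omega

theorem countable_Tmap_preimage_endpoints : (Tmap m ⁻¹' {0, theta m}).Countable := by
  refine (countable_range fun k : ℤ => 1 / (theta m * k)).mono ?_
  intro x hx
  by_cases hx0 : x = 0
  · -- `k = 0` hits `x = 0` because `1 / 0 = 0`
    exact ⟨0, by simp [hx0]⟩
  rw [mem_preimage, Tmap, if_neg hx0] at hx
  rcases hx with h | h
  · refine ⟨⌊1 / (x * theta m)⌋, ?_⟩
    change 1 / (theta m * _) = x
    rw [← sub_eq_zero.1 h, one_div_one_div]
  · refine ⟨⌊1 / (x * theta m)⌋ + 1, ?_⟩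
    have h' : 1 / x = theta m * ((⌊1 / (x * theta m)⌋ : ℤ) + 1 : ℝ) := by
      rw [mem_singleton_iff] at h; linarith
    push_cast
    rw [← h', one_div_one_div]

theorem hasDerivAt_uMap (c : ℕ) {x : ℝ} (hx : (c : ℝ) * theta m + x ≠ 0) :
    HasDerivAt (uMap m c) (-(((c : ℝ) * theta m + x) ^ 2)⁻¹) x := by
  have hu : uMap m c = fun y => ((c : ℝ) * theta m + y)⁻¹ := by
    funext y; rw [uMap, one_div]
  rw [hu]
  exact (((hasDerivAt_id x).const_add ((c : ℝ) * theta m)).inv hx).congr_deriv (by simp [neg_div])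

theorem injOn_uMap (hm : 0 < m) (c : ℕ) : InjOn (uMap m c) (Ioo 0 (theta m)) :=
  fun y hy z hz h => by rw [← Tmap_uMap hm c hy, h, Tmap_uMap hm c hz]

theorem Tmap_preimage_inter_Ioo_ae_eq (hm : 0 < m) {A : Set ℝ} (hA : A ⊆ Icc 0 (theta m)) :
    (Tmap m ⁻¹' (A ∩ Ioo 0 (theta m)) ∩ Ioc 0 (theta m) : Set ℝ) =ᵐ[volume]
      (Tmap m ⁻¹' A ∩ Icc 0 (theta m) : Set ℝ) := by
  have hexcess : (Tmap m ⁻¹' A ∩ Icc 0 (theta m)) \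
      (Tmap m ⁻¹' (A ∩ Ioo 0 (theta m)) ∩ Ioc 0 (theta m)) ⊆ Tmap m ⁻¹' {0, theta m} := by
    rintro x ⟨⟨hTx, hx⟩, hx'⟩
    by_cases hx0 : x = 0
    · simp [hx0, Tmap]
    have hxIoc : x ∈ Ioc 0 (theta m) := ⟨lt_of_le_of_ne hx.1 (Ne.symm hx0), hx.2⟩
    exact Icc_sdiff_Ioo_same (theta_pos hm).le ▸ ⟨hA hTx, fun h => hx' ⟨⟨hTx, h⟩, hxIoc⟩⟩
  exact (LE.le.eventuallyLE
      (inter_subset_inter (preimage_mono inter_subset_left) Ioc_subset_Icc_self)).antisymm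
    (ae_le_set.2 (measure_mono_null hexcess
      (countable_Tmap_preimage_endpoints.measure_zero _)))

theorem setIntegral_Vop_eq (hm : 0 < m) {f : ℝ → ℝ} (hf : IntegrableOn f (Icc 0 (theta m)))
    {A : Set ℝ} (hA : A ⊆ Icc 0 (theta m)) (hAm : MeasurableSet A) :
    ∫ x in A, Vop m f x ∂(volume.restrict (Icc 0 (theta m))) =
      ∫ x in Tmap m ⁻¹' A, f x ∂(volume.restrict (Icc 0 (theta m))) := by
  set A' := A ∩ Ioo 0 (theta m)
  have hA' : A' ⊆ Ioo 0 (theta m) := inter_subset_right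
  have hA'm : MeasurableSet A' := hAm.inter measurableSet_Ioo
  have hpre := Tmap_preimage_inter_Ioc hm hA'
  have hu : ∀ i : ℕ, ∀ x ∈ A', HasDerivWithinAt (uMap m (i + m))
      (-((((i + m : ℕ) : ℝ) * theta m + x) ^ 2)⁻¹) A' x := fun i x hx =>
    (hasDerivAt_uMap _ (by have := theta_pos hm; have := (hA' hx).1; positivity)).hasDerivWithinAt
  rw [Measure.restrict_restrict' measurableSet_Icc, Measure.restrict_restrict' measurableSet_Icc,
    inter_eq_left.2 hA, ← setIntegral_congr_set (inter_Ioo_ae_eq hA),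
    ← setIntegral_congr_set (Tmap_preimage_inter_Ioo_ae_eq hm hA), hpre,
    ← integral_tsum_abs_deriv_smul_eq_integral_iUnion_image hA'm hu
      (fun i => (injOn_uMap hm _).mono hA') (pairwise_disjoint_image_uMap hm hA')
      (hf.mono_set (hpre ▸ inter_subset_right.trans Ioc_subset_Icc_self))]
  refine setIntegral_congr_fun hA'm fun x hx => tsum_congr fun i => ?_
  have hd : 0 < ((i + m : ℕ) : ℝ) * theta m + x := by
    have := theta_pos hm; have := (hA' hx).1; positivity
  rw [abs_neg, abs_of_pos (by positivity), smul_eq_mul, div_eq_inv_mul]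

theorem Pfun_mul_one_add_theta_mul_uMap (hm : 0 < m) {c : ℕ} (hc : 0 < c) {x : ℝ} (hx : 0 ≤ x) :
    Pfun m c x * (1 + theta m * uMap m c x) = (1 + theta m * x) / ((c : ℝ) * theta m + x) ^ 2 := by
  have hθ := theta_pos hm
  have hc' : (0 : ℝ) < c := by exact_mod_cast hc
  have hd : 0 < (c : ℝ) * theta m + x := by positivity
  have hd' : 0 < x + ((c : ℝ) + 1) * theta m := by positivity
  rw [Pfun, uMap]
  field_simp
  ring

theorem Uop_eq_mul_Vop (hm : 0 < m) {φ ψ : ℝ → ℝ} (h : ∀ y, 0 ≤ y → φ y = (1 + theta m * y) * ψ y)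
    {x : ℝ} (hx : 0 ≤ x) : Uop m φ x = (1 + theta m * x) * Vop m ψ x := by
  rw [Uop, Vop, ← tsum_mul_left]
  refine tsum_congr fun i => ?_
  have hu : 0 ≤ uMap m (i + m) x := by
    unfold uMap; have := theta_pos hm; positivity
  rw [h _ hu, ← mul_assoc, Pfun_mul_one_add_theta_mul_uMap hm (by omega) hx]
  ring

theorem iterate_Uop_eq_mul_iterate_Vop (hm : 0 < m) (f : ℝ → ℝ) (n : ℕ) {x : ℝ} (hx : 0 ≤ x) :
    (Uop m)^[n] (fun y => (1 + theta m * y) * f y) x = (1 + theta m * x) * (Vop m)^[n] f x := by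
  induction n generalizing x with
  | zero => rfl
  | succ n ih =>
    rw [Function.iterate_succ_apply', Function.iterate_succ_apply']
    exact Uop_eq_mul_Vop hm (fun y hy => ih hy) hx

theorem Vop_perron_frobenius_general (m : ℕ) (hm : 2 ≤ m) :
    ∀ f : ℝ → ℝ, Integrable f (volume.restrict (Icc 0 (theta m))) →
      (∀ A ⊆ Icc 0 (theta m), MeasurableSet A →
          ∫ x in A, Vop m f x ∂(volume.restrict (Icc 0 (theta m))) =
            ∫ x in (Tmap m) ⁻¹' A, f x ∂(volume.restrict (Icc 0 (theta m)))) ∧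
      (∀ n : ℕ, 1 ≤ n →
        ∀ᵐ x ∂(volume.restrict (Icc 0 (theta m))),
          (Vop m)^[n] f x =
            (Uop m)^[n] (fun y => (1 + theta m * y) * f y) x / (1 + theta m * x)) := by
  have hm₀ : 0 < m := by omega
  intro f hf
  refine ⟨fun A hA hAm => setIntegral_Vop_eq hm₀ hf hA hAm, fun n _ => ?_⟩
  filter_upwards [ae_restrict_mem measurableSet_Icc] with x hx
  have hθx : 0 < 1 + theta m * x := by have := theta_pos hm₀; have := hx.1; positivity
  rw [iterate_Uop_eq_mul_iterate_Vop hm₀ f n hx.1, mul_div_cancel_left₀ _ hθx.ne']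

/-- V is the Perron-Frobenius operator of T_θ under Lebesgue measure λ_θ on [0,θ],
and Vⁿf = Uⁿg/(1+θx) a.e. where g(x) = (1+θx)f(x). -/
theorem Vop_perron_frobenius (m : ℕ) (hm : 2 ≤ m) (hns : ¬ IsSquare m) :
    ∀ f : ℝ → ℝ, Integrable f (volume.restrict (Icc 0 (theta m))) →
      (∀ A ⊆ Icc 0 (theta m), MeasurableSet A →
          ∫ x in A, Vop m f x ∂(volume.restrict (Icc 0 (theta m))) =
            ∫ x in (Tmap m) ⁻¹' A, f x ∂(volume.restrict (Icc 0 (theta m)))) ∧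
      (∀ n : ℕ, 1 ≤ n →
        ∀ᵐ x ∂(volume.restrict (Icc 0 (theta m))),
          (Vop m)^[n] f x =
            (Uop m)^[n] (fun y => (1 + theta m * y) * f y) x / (1 + theta m * x)) :=
  Vop_perron_frobenius_general m hm
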